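/- Let K be a field and G a polycyclic-by-finite group. Then G is of K-linear Markov type: for every finite-dimensional K-vector space A, every linear subshift of A^G is of finite type. -/

import Mathlib

def shiftSigma (G : Type*) [Group G] {A : Type*} (D : Set G) (P : Set (D → A)) :
    Set (G → A) :=
  {x | ∀ g : G, (fun d : D => x (g * (d : G))) ∈ P}

def prodiscreteTop (G A : Type*) : TopologicalSpace (G → A) :=
  @Pi.topologicalSpace G (fun _ => A) (fun _ => ⊥)

def IsLinearSubshift (K : Type*) {G A : Type*} [Field K] [Group G] [AddCommGroup A]
    [Module K A] (S : Set (G → A)) : Prop :=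
  (∃ M : Submodule K (G → A), (M : Set (G → A)) = S) ∧
    (∀ g : G, ∀ x ∈ S, (fun h => x (g⁻¹ * h)) ∈ S) ∧
    @IsClosed _ (prodiscreteTop G A) S

def IsSFT {G A : Type*} [Group G] (S : Set (G → A)) : Prop :=
  ∃ (D : Finset G) (P : Set (↥(D : Set G) → A)), S = shiftSigma G (D : Set G) P

def IsLCA (K : Type*) {G A : Type*} [Field K] [Group G] [AddCommGroup A] [Module K A]
    (τ : (G → A) → (G → A)) : Prop :=
  IsLinearMap K τ ∧ ∃ (M : Finset G) (μ : (↥(M : Set G) → A) → A), IsLinearMap K μ ∧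
    ∀ (x : G → A) (g : G), τ x g = μ (fun m : (M : Set G) => x (g * (m : G)))

def IsPolycyclic (G : Type*) [Group G] : Prop :=
  ∃ (n : ℕ) (s : Fin (n + 1) → Subgroup G), s 0 = ⊥ ∧ s (Fin.last n) = ⊤ ∧
    ∀ i : Fin n, (s i.castSucc ≤ s i.succ) ∧
      ∃ hn : ((s i.castSucc).subgroupOf (s i.succ)).Normal,
        letI := hn
        IsCyclic (↥(s i.succ) ⧸ (s i.castSucc).subgroupOf (s i.succ))

def IsPolycyclicByFinite (G : Type*) [Group G] : Prop :=
  ∃ H : Subgroup G, IsPolycyclic ↥H ∧ H.FiniteIndex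

/-!
The group algebra `K[G]` of a polycyclic-by-finite group is left Noetherian (Hall). Along the
series, a finite-index step makes `K[G]` a finitely generated `K[H]`-module, and an infinite
cyclic step `G ⧸ N ≃ ℤ` is the Hilbert basis argument for `K[G] = ⨁ₙ tⁿ K[N]`, with leading
coefficients read off in degree `0` after multiplying by a power of `t`.

Noetherianity gives the Markov property. The finitely supported linear functionals on `G → A`
that kill every translate of a linear subshift `S` form a left `K[G]`-submodule of `K[G]^d`, so
finitely many of them generate it, and their supports give the window `D`. A configuration killed
by these generators is killed by all of them, and as `S` is closed, duality on a finite window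
puts it in `S`.
-/

open MonoidAlgebra

namespace MonoidAlgebra

variable {K G : Type*} [Field K] [Group G]

noncomputable instance subgroupModule (H : Subgroup G) : Module K[H] K[G] :=
  Module.compHom _ (mapDomainRingHom K H.subtype)

theorem subgroup_smul_def {H : Subgroup G} (b : K[H]) (x : K[G]) :
    b • x = mapDomainRingHom K H.subtype b * x := rfl

instance subgroup_isScalarTower (H : Subgroup G) : IsScalarTower K[H] K[G] K[G] :=
  ⟨fun b x y => mul_assoc (mapDomainRingHom K H.subtype b) x y⟩

theorem single_subgroup_smul {H : Subgroup G} (h : H) (c : K) (x : K[G]) :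
    single h c • x = single (h : G) c * x := by
  rw [subgroup_smul_def, mapDomainRingHom_apply, mapDomain_single, Subgroup.coe_subtype]

theorem isNoetherianRing_of_finite [Finite G] : IsNoetherianRing K[G] := by
  have : Module.Finite K K[G] := Module.Finite.equiv (coeffLinearEquiv K).symm
  exact isNoetherian_of_tower K inferInstance

theorem isNoetherianRing_of_mulEquiv {H : Type*} [Group H] (e : G ≃* H)
    [IsNoetherianRing K[G]] : IsNoetherianRing K[H] :=
  isNoetherianRing_of_ringEquiv _ (mapDomainRingEquiv K e)

theorem isNoetherianRing_of_finiteIndex (H : Subgroup G) [H.FiniteIndex]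
    [IsNoetherianRing K[H]] : IsNoetherianRing K[G] := by
  suffices Module.Finite K[H] K[G] from isNoetherian_of_tower K[H] inferInstance
  refine Module.finite_def.mpr (Submodule.fg_def.mpr
    ⟨Set.range fun q : G ⧸ H => single q.out⁻¹ 1, Set.finite_range _, eq_top_iff.mpr ?_⟩)
  rintro x -
  induction x using MonoidAlgebra.induction_linear with
  | zero => exact zero_mem _
  | add x y hx hy => exact add_mem hx hy
  | single g c =>
    obtain ⟨h, hh⟩ := QuotientGroup.mk_out_eq_mul H g⁻¹
    have : single g c = single h c • single (QuotientGroup.mk g⁻¹ : G ⧸ H).out⁻¹ 1 := by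
      rw [single_subgroup_smul, single_mul_single, mul_one, hh]
      group
    rw [this]
    exact Submodule.smul_mem _ _ (Submodule.subset_span ⟨_, rfl⟩)

variable (K) in
noncomputable def restrictToSubgroup (H : Subgroup G) : K[G] →ₗ[K[H]] K[H] where
  toFun := comapDomain Subtype.val Subtype.val_injective
  map_add' := comapDomain_add _ _
  map_smul' b x := by
    induction b using MonoidAlgebra.induction_linear with
    | zero => simp [comapDomain_zero]
    | add b b' hb hb' => simp only [add_smul, comapDomain_add, hb, hb', RingHom.id_apply]
    | single h c =>
      ext u
      simp [single_subgroup_smul, coeff_comapDomain]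

theorem coeff_restrictToSubgroup (H : Subgroup G) (x : K[G]) (u : H) :
    (restrictToSubgroup K H x).coeff u = x.coeff u := by
  simp [restrictToSubgroup, coeff_comapDomain]

variable (K) in
noncomputable def subgroupSupported (H : Subgroup G) (s : Set G)
    (hs : ∀ h ∈ H, ∀ g ∈ s, h * g ∈ s) : Submodule K[H] K[G] where
  toAddSubmonoid := (supported K K s).toAddSubmonoid
  smul_mem' b x hx := by
    induction b using MonoidAlgebra.induction_linear with
    | zero => simp [zero_mem]
    | add b b' hb hb' => simpa [add_smul] using add_mem hb hb'
    | single h c =>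
      have hx : ↑x.coeff.support ⊆ s := hx
      intro g hg
      rw [single_subgroup_smul] at hg
      have : x.coeff ((h : G)⁻¹ * g) ≠ 0 := by simp_all
      simpa using hs h h.2 _ (hx (Finsupp.mem_support_iff.mpr this))

section DegreeBand

variable (K) (φ : G →* Multiplicative ℤ)

noncomputable def degreeBand (a b : ℤ) : Submodule K[φ.ker] K[G] :=
  subgroupSupported K φ.ker {g | (φ g).toAdd ∈ Set.Icc a b} fun h hh g hg => by
    simpa [(MonoidHom.mem_ker).mp hh] using hg

variable {K φ}

theorem mem_degreeBand {a b : ℤ} {r : K[G]} :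
    r ∈ degreeBand K φ a b ↔
      ∀ g ∈ r.coeff.support, a ≤ (φ g).toAdd ∧ (φ g).toAdd ≤ b :=
  Iff.rfl

theorem degreeBand_mono {a b a' b' : ℤ} (ha : a' ≤ a) (hb : b ≤ b') :
    degreeBand K φ a b ≤ degreeBand K φ a' b' := fun _ hr g hg =>
  ⟨ha.trans (mem_degreeBand.mp hr g hg).1, (mem_degreeBand.mp hr g hg).2.trans hb⟩

theorem single_mul_mem_degreeBand {a b : ℤ} {r : K[G]} (hr : r ∈ degreeBand K φ a b) (g : G) :
    single g 1 * r ∈ degreeBand K φ (a + (φ g).toAdd) (b + (φ g).toAdd) := by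
  refine mem_degreeBand.mpr fun g' hg' => ?_
  have := mem_degreeBand.mp hr _
    (Finsupp.mem_support_iff.mpr (by simpa using hg' : r.coeff (g⁻¹ * g') ≠ 0))
  simp only [map_mul, map_inv, toAdd_mul, toAdd_inv] at this
  omega

theorem mem_degreeBand_of_restrictToSubgroup_eq_zero {a : ℤ} {r : K[G]}
    (hr : r ∈ degreeBand K φ a 0) (h0 : restrictToSubgroup K φ.ker r = 0) :
    r ∈ degreeBand K φ a (-1) := by
  refine mem_degreeBand.mpr fun g hg => ?_
  obtain ⟨hag, hg0⟩ := mem_degreeBand.mp hr g hg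
  have hdeg : (φ g).toAdd ≠ 0 := fun hdeg => by
    have hker : g ∈ φ.ker := by simpa [MonoidHom.mem_ker] using hdeg
    have := coeff_restrictToSubgroup φ.ker r ⟨g, hker⟩
    simp_all
  exact ⟨hag, by omega⟩

theorem exists_mem_degreeBand (r : K[G]) : ∃ m : ℕ, r ∈ degreeBand K φ (-m) m := by
  refine ⟨r.coeff.support.sup fun g => (φ g).toAdd.natAbs, mem_degreeBand.mpr fun g hg => ?_⟩
  have := Finset.le_sup (f := fun g => (φ g).toAdd.natAbs) hg
  omega

theorem degreeBand_le_span {t : G} (ht : φ t = Multiplicative.ofAdd 1) (a b : ℤ) :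
    degreeBand K φ a b ≤
      Submodule.span K[φ.ker] ((fun k : ℤ => single (t ^ k) (1 : K)) '' Set.Icc a b) := by
  intro r hr
  rw [← sum_coeff_single r]
  refine Submodule.finsuppSum_mem _ _ _ _ fun g hg => ?_
  have hker : g * t ^ (-(φ g).toAdd) ∈ φ.ker := by
    simp [MonoidHom.mem_ker, ht, ← ofAdd_zsmul]
  have : single g (r.coeff g) =
      single (⟨_, hker⟩ : φ.ker) (r.coeff g) • single (t ^ (φ g).toAdd) 1 := by
    rw [single_subgroup_smul, single_mul_single, mul_one]
    group
  rw [this]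
  exact Submodule.smul_mem _ _ (Submodule.subset_span
    ⟨_, mem_degreeBand.mp hr g (Finsupp.mem_support_iff.mpr hg), rfl⟩)

-- The leading-coefficient ideals of the Hilbert basis argument, with the leading term in degree 0.
variable (φ) in
noncomputable def leadingIdeal (I : Ideal K[G]) (n : ℕ) : Ideal K[φ.ker] :=
  (I.restrictScalars K[φ.ker] ⊓ degreeBand K φ (-n) 0).map (restrictToSubgroup K φ.ker)

theorem leadingIdeal_mono (I : Ideal K[G]) : Monotone (leadingIdeal φ I) := fun _ _ hmn =>
  Submodule.map_mono (inf_le_inf_left _ (degreeBand_mono (by omega) le_rfl))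

theorem le_span_of_leadingIdeal_eq {t : G} (ht : φ t = Multiplicative.ofAdd 1) {I : Ideal K[G]}
    {n : ℕ} (hn : ∀ m, n ≤ m → leadingIdeal φ I n = leadingIdeal φ I m) {s : Set K[G]}
    (hs : I.restrictScalars K[φ.ker] ⊓ degreeBand K φ (-n) 0 ≤
      (Ideal.span s).restrictScalars K[φ.ker]) :
    I ≤ Ideal.span s := by
  have hlow (m : ℕ) : ∀ r ∈ I, r ∈ degreeBand K φ (-(n + m)) 0 → r ∈ Ideal.span s := by
    induction m with
    | zero => exact fun r hrI hr => hs ⟨hrI, by simpa using hr⟩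
    | succ m ih =>
      intro r hrI hr
      obtain ⟨q, ⟨hqI, hq⟩, hqr⟩ : restrictToSubgroup K φ.ker r ∈ leadingIdeal φ I n :=
        hn (n + (m + 1)) (by omega) ▸ ⟨r, ⟨hrI, by simpa using hr⟩, rfl⟩
      have hrq : r - q ∈ degreeBand K φ (-(n + (m + 1))) (-1) :=
        mem_degreeBand_of_restrictToSubgroup_eq_zero
          (sub_mem hr (degreeBand_mono (by omega) le_rfl hq)) (by rw [map_sub, hqr, sub_self])
      have hshift : single t 1 * (r - q) ∈ Ideal.span s :=
        ih _ (I.mul_mem_left _ (I.sub_mem hrI hqI))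
          (degreeBand_mono (by simp [ht]; omega) (by simp [ht]) (single_mul_mem_degreeBand hrq t))
      have hr' : r = single t⁻¹ 1 * (single t 1 * (r - q)) + q := by
        rw [← mul_assoc, single_mul_single, inv_mul_cancel, mul_one, ← one_def, one_mul,
          sub_add_cancel]
      rw [hr']
      exact add_mem (Ideal.mul_mem_left _ _ hshift) (hs ⟨hqI, hq⟩)
  intro r hrI
  have hdeg (k : ℤ) : (φ (t ^ k)).toAdd = k := by simp [ht, ← ofAdd_zsmul]
  obtain ⟨m, hm⟩ := exists_mem_degreeBand (φ := φ) r
  have hshift : single (t ^ (-m : ℤ)) 1 * r ∈ Ideal.span s :=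
    hlow (2 * m) _ (I.mul_mem_left _ hrI) (degreeBand_mono (by rw [hdeg]; omega)
      (by rw [hdeg]; omega) (single_mul_mem_degreeBand hm _))
  have hr' : r = single (t ^ (m : ℤ)) 1 * (single (t ^ (-m : ℤ)) 1 * r) := by
    rw [← mul_assoc, single_mul_single, ← zpow_add, add_neg_cancel, zpow_zero, mul_one,
      ← one_def, one_mul]
  rw [hr']
  exact Ideal.mul_mem_left _ _ hshift

end DegreeBand

theorem isNoetherianRing_of_ker_of_surjective (φ : G →* Multiplicative ℤ)
    (hφ : Function.Surjective φ) [IsNoetherianRing K[φ.ker]] : IsNoetherianRing K[G] := by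
  obtain ⟨t, ht⟩ := hφ (Multiplicative.ofAdd 1)
  refine (isNoetherianRing_iff_ideal_fg _).mpr fun I => ?_
  obtain ⟨n, hn⟩ : ∃ n, ∀ m, n ≤ m → leadingIdeal φ I n = leadingIdeal φ I m :=
    monotone_stabilizes_iff_noetherian.mpr inferInstance ⟨_, leadingIdeal_mono I⟩
  obtain ⟨s, hs⟩ : (I.restrictScalars K[φ.ker] ⊓ degreeBand K φ (-n) 0).FG :=
    have := isNoetherian_span_of_finite K[φ.ker]
      ((Set.finite_Icc (-n : ℤ) 0).image fun k => single (t ^ k) (1 : K))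
    have := isNoetherian_of_le (degreeBand_le_span ht (-n) 0)
    isNoetherian_submodule_right.mp this _
  have hsI : (s : Set K[G]) ⊆ I := fun x hx =>
    (hs ▸ Submodule.subset_span hx : x ∈ I.restrictScalars K[φ.ker] ⊓ _).1
  exact ⟨s, le_antisymm (Ideal.span_le.mpr hsI)
    (le_span_of_leadingIdeal_eq ht hn (hs ▸ Submodule.span_le.mpr Ideal.subset_span))⟩

theorem isNoetherianRing_of_isCyclic_quotient (N : Subgroup G) [N.Normal] [IsCyclic (G ⧸ N)]
    [IsNoetherianRing K[N]] : IsNoetherianRing K[G] := by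
  cases finite_or_infinite (G ⧸ N) with
  | inl _ =>
    have := Subgroup.finiteIndex_of_finite_quotient (H := N)
    exact isNoetherianRing_of_finiteIndex N
  | inr _ =>
    let φ : G →* Multiplicative ℤ :=
      intCyclicMulEquiv.symm.toMonoidHom.comp (QuotientGroup.mk' N)
    have hker : N = φ.ker := by
      ext g
      simp [φ]
    have := isNoetherianRing_of_mulEquiv (K := K) (MulEquiv.subgroupCongr hker)
    exact isNoetherianRing_of_ker_of_surjective φ
      (intCyclicMulEquiv.symm.surjective.comp (QuotientGroup.mk'_surjective N))

theorem isNoetherianRing_of_isPolycyclic (hG : IsPolycyclic G) : IsNoetherianRing K[G] := by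
  obtain ⟨n, s, hbot, htop, hstep⟩ := hG
  have hseries (i : Fin (n + 1)) : IsNoetherianRing K[s i] := by
    induction i using Fin.induction with
    | zero => rw [hbot]; exact isNoetherianRing_of_finite
    | succ i ih =>
      obtain ⟨hle, _, _⟩ := hstep i
      have := isNoetherianRing_of_mulEquiv (K := K) (Subgroup.subgroupOfEquivOfLe hle).symm
      exact isNoetherianRing_of_isCyclic_quotient ((s i.castSucc).subgroupOf (s i.succ))
  have := hseries (Fin.last n)
  rw [htop] at this
  exact isNoetherianRing_of_mulEquiv Subgroup.topEquiv

theorem isNoetherianRing_of_isPolycyclicByFinite (hG : IsPolycyclicByFinite G) :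
    IsNoetherianRing K[G] := by
  obtain ⟨H, hH, _⟩ := hG
  have := isNoetherianRing_of_isPolycyclic (K := K) hH
  exact isNoetherianRing_of_finiteIndex H

end MonoidAlgebra

theorem exists_finset_forall_exists_ne_of_isClosed {G A : Type*} {S : Set (G → A)}
    (hS : @IsClosed _ (prodiscreteTop G A) S) {x : G → A} (hx : x ∉ S) :
    ∃ W : Finset G, ∀ y ∈ S, ∃ g ∈ W, y g ≠ x g := by
  let _ : TopologicalSpace A := ⊥
  have : DiscreteTopology A := ⟨rfl⟩
  obtain ⟨W, u, hu, hWS⟩ := isOpen_pi_iff.mp hS.isOpen_compl x hx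
  refine ⟨W, fun y hy => ?_⟩
  by_contra! hxy
  exact hWS (fun g hg => hxy g hg ▸ (hu g hg).2) hy

section Pairing

variable {K G A : Type*} [Field K] [AddCommGroup A] [Module K A]
  {ι : Type*} [Fintype ι] (b : Module.Basis ι K A)

-- A tuple `f : ι → K[G]` acts as a finitely supported linear functional on `G → A`.
noncomputable def basisPairing (f : ι → K[G]) (x : G → A) : K :=
  ∑ i, Finsupp.linearCombination K (fun g => b.coord i (x g)) (f i).coeff

theorem basisPairing_add (f f' : ι → K[G]) (x : G → A) :
    basisPairing b (f + f') x = basisPairing b f x + basisPairing b f' x := by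
  simp [basisPairing, coeff_add, Finset.sum_add_distrib]

theorem basisPairing_zero (x : G → A) : basisPairing b (0 : ι → K[G]) x = 0 := by
  simp [basisPairing]

theorem basisPairing_congr {f : ι → K[G]} {D : Set G} (hf : ∀ i, ↑(f i).coeff.support ⊆ D)
    {x y : G → A} (hxy : ∀ g ∈ D, x g = y g) : basisPairing b f x = basisPairing b f y := by
  refine Finset.sum_congr rfl fun i _ => ?_
  simp only [Finsupp.linearCombination_apply]
  exact Finsupp.sum_congr fun g hg => by rw [hxy g (hf i hg)]

theorem exists_basisPairing_eq (W : Finset G) (ψ : (W → A) →ₗ[K] K) :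
    ∃ f : ι → K[G], ∀ x : G → A, basisPairing b f x = ψ (fun w => x w) := by
  classical
  refine ⟨fun i => ∑ w : W, single (w : G) (ψ (Pi.single w (b i))), fun x => ?_⟩
  have hw (w : W) : ∑ i, ψ (Pi.single w (b i)) * b.coord i (x w) = ψ (Pi.single w (x w)) := by
    simpa [mul_comm] using LinearMap.congr_fun
      (b.sum_dual_apply_smul_coord (ψ ∘ₗ LinearMap.single K (fun _ => A) w)) (x w)
  calc basisPairing b _ x = ∑ i, ∑ w : W, ψ (Pi.single w (b i)) * b.coord i (x w) := by
        simp [basisPairing, coeff_sum]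
    _ = ∑ w : W, ψ (Pi.single w (x w)) := by rw [Finset.sum_comm]; simp only [hw]
    _ = ψ (fun w => x w) := by rw [← map_sum, Finset.univ_sum_single]

theorem linearCombination_coeff_single_mul [Group G] (w : G → K) (g : G) (c : K) (p : K[G]) :
    Finsupp.linearCombination K w (single g c * p).coeff =
      c * Finsupp.linearCombination K (fun h => w (g * h)) p.coeff := by
  induction p using MonoidAlgebra.induction_linear with
  | zero => simp
  | add p q hp hq => simp [mul_add, coeff_add, hp, hq]
  | single h c' =>
    simp only [single_mul_single, coeff_single, Finsupp.linearCombination_single, smul_eq_mul,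
      mul_assoc]

theorem basisPairing_single_smul [Group G] (g : G) (c : K) (f : ι → K[G]) (x : G → A) :
    basisPairing b (single g c • f) x = c * basisPairing b f (fun h => x (g * h)) := by
  simp only [basisPairing, Finset.mul_sum, Pi.smul_apply, smul_eq_mul,
    linearCombination_coeff_single_mul]

end Pairing

section Annihilator

variable {K G A : Type*} [Field K] [Group G] [AddCommGroup A] [Module K A]
  {ι : Type*} [Fintype ι] (b : Module.Basis ι K A)

noncomputable def shiftAnnihilator (X : Set (G → A)) : Submodule K[G] (ι → K[G]) where
  carrier := {f | ∀ x ∈ X, ∀ g, basisPairing b f (fun h => x (g * h)) = 0}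
  add_mem' hf hf' x hx g := by rw [basisPairing_add, hf x hx g, hf' x hx g, add_zero]
  zero_mem' _ _ _ := basisPairing_zero b _
  smul_mem' c f hf x hx g := by
    induction c using MonoidAlgebra.induction_linear with
    | zero => rw [zero_smul, basisPairing_zero]
    | add c c' hc hc' => rw [add_smul, basisPairing_add, hc, hc', add_zero]
    | single g' c =>
      simpa [basisPairing_single_smul, mul_assoc] using congrArg (c * ·) (hf x hx (g * g'))

theorem exists_mem_shiftAnnihilator_basisPairing_ne {S : Set (G → A)}
    (hS : IsLinearSubshift K S) {x : G → A} (hx : x ∉ S) :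
    ∃ f ∈ shiftAnnihilator b S, basisPairing b f x ≠ 0 := by
  obtain ⟨⟨M, hM⟩, hinv, hclosed⟩ := hS
  obtain ⟨W, hW⟩ := exists_finset_forall_exists_ne_of_isClosed hclosed hx
  let π : (G → A) →ₗ[K] (W → A) := LinearMap.funLeft K A Subtype.val
  have hxW : π x ∉ M.map π := by
    rintro ⟨y, hyM, hyx⟩
    obtain ⟨g, hg, hne⟩ := hW y (hM ▸ hyM)
    exact hne (congrFun hyx ⟨g, hg⟩)
  obtain ⟨ψ, hψx, hψM⟩ := Submodule.exists_dual_map_eq_bot_of_notMem hxW inferInstance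
  obtain ⟨f, hf⟩ := exists_basisPairing_eq b W ψ
  refine ⟨f, fun y hy g => ?_, by rwa [hf]⟩
  have hyg : (fun h => y (g * h)) ∈ M := by
    rw [← SetLike.mem_coe, hM]
    simpa using hinv g⁻¹ y hy
  have := Submodule.mem_map_of_mem (f := ψ) (Submodule.mem_map_of_mem (f := π) hyg)
  rw [hψM, Submodule.mem_bot] at this
  rw [hf]
  exact this

end Annihilator

theorem isSFT_of_isNoetherianRing {K G A : Type*} [Field K] [Group G] [AddCommGroup A]
    [Module K A] [IsNoetherianRing K[G]] [FiniteDimensional K A] {S : Set (G → A)}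
    (hS : IsLinearSubshift K S) : IsSFT S := by
  classical
  let b := Module.finBasis K A
  obtain ⟨F, hF⟩ := IsNoetherian.noetherian (shiftAnnihilator b S)
  let D : Finset G := F.biUnion fun f => Finset.univ.biUnion fun i => (f i).coeff.support
  have hD (f) (hf : f ∈ F) (i) : ↑(f i).coeff.support ⊆ (D : Set G) := fun g hg => by
    simp only [D, Finset.coe_biUnion, Set.mem_iUnion]
    exact ⟨f, hf, i, Finset.mem_univ _, hg⟩
  let extend (u : ↥(D : Set G) → A) : G → A := fun g =>
    if h : g ∈ (D : Set G) then u ⟨g, h⟩ else 0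
  have hwindow (x : G → A) (g : G) (f) (hf : f ∈ F) :
      basisPairing b f (extend fun d => x (g * d)) = basisPairing b f fun h => x (g * h) :=
    basisPairing_congr b (hD f hf) fun h hh => dif_pos hh
  refine ⟨D, {u | ∀ f ∈ F, basisPairing b f (extend u) = 0}, Set.ext fun x => ?_⟩
  constructor
  · intro hx g f hf
    rw [hwindow x g f hf]
    exact (hF ▸ Submodule.subset_span hf : f ∈ shiftAnnihilator b S) x hx g
  · intro hx
    by_contra hxS
    obtain ⟨f, hfS, hfx⟩ := exists_mem_shiftAnnihilator_basisPairing_ne b hS hxS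
    have hle : shiftAnnihilator b S ≤ shiftAnnihilator b {x} :=
      hF ▸ Submodule.span_le.mpr fun f hf y hy g => hy ▸ hwindow x g f hf ▸ hx g f hf
    exact hfx (by simpa using hle hfS x rfl 1)

theorem stmt12 {G : Type} (K : Type) [Group G] [Field K]
    (hpoly : IsPolycyclicByFinite G) :
    ∀ (A : Type) (_ : AddCommGroup A) (_ : Module K A), FiniteDimensional K A →
      ∀ S : Set (G → A), IsLinearSubshift K S → IsSFT S := by
  intro A _ _ _ S hS
  have := MonoidAlgebra.isNoetherianRing_of_isPolycyclicByFinite (K := K) hpoly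
  exact isSFT_of_isNoetherianRing hS
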